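/- arXiv:2604.18558 — 2 statements merged into one kernel-verified Lean document; each statement's English description precedes it below -/
import Mathlib

section
/- Let G be a finite graph with vertex set V, and let c > 0 be such that for every vertex v ∈ V and every integer k ≥ 1, the number of connected subsets of V of cardinality k containing v is at most e^{ck}. Then for every nonempty Δ ⊆ V and every integer n ≥ |Δ|, the number of independent families of polymers of G, each of whose polymers intersects Δ, whose trace has cardinality exactly n, is at most 4^n · e^{cn}. -/
open Finset

variable {V : Type*}

/-- A polymer: a nonempty subset of vertices inducing a connected subgraph. -/
def IsPolymer (G : SimpleGraph V) (γ : Finset V) : Prop :=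
  γ.Nonempty ∧ (G.induce (↑γ : Set V)).Connected

/-- An independent family of polymers: a finite set of polymers such that the union of
any two distinct members does not induce a connected subgraph. -/
def IsIndepFamily [DecidableEq V] (G : SimpleGraph V) (Γ : Finset (Finset V)) : Prop :=
  (∀ γ ∈ Γ, IsPolymer G γ) ∧
    ∀ γ ∈ Γ, ∀ γ' ∈ Γ, γ ≠ γ' → ¬ (G.induce (↑(γ ∪ γ') : Set V)).Connected

/-- The trace of a family of polymers: the union of its members. -/
def traceFam [DecidableEq V] (Γ : Finset (Finset V)) : Finset V := Γ.sup id

/-!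
Two overlapping connected sets have a connected union, so the members of an independent family
are pairwise disjoint. Fix for every set `γ` meeting `Δ` a root in `γ ∩ Δ`; then a family `Γ` is
determined by the map sending `v` to the member of `Γ` rooted at `v` (or `∅`). The sizes `κ v` of
these members are supported on `Δ` and add up to `|Tr Γ| = n`, so there are at most
`C(|Δ| + n - 1, n) ≤ 2 ^ (2 n)` size profiles `κ`, and for each of them at most
`∏ v, e ^ (c κ v) = e ^ (c n)` choices of the rooted polymers.
-/

section Rooting

variable [DecidableEq V] {root : Finset V → V} {Γ : Finset (Finset V)} {γ : Finset V}

/-- The member of `Γ` rooted at `v`, or `∅` if there is none. -/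
def rootedMember (root : Finset V → V) (Γ : Finset (Finset V)) (v : V) : Finset V :=
  {γ ∈ Γ | root γ = v}.sup id

lemma filter_root_eq_singleton (hinj : Set.InjOn root Γ) (hγ : γ ∈ Γ) :
    {γ' ∈ Γ | root γ' = root γ} = {γ} := by
  ext γ'
  simp only [mem_filter, mem_singleton]
  exact ⟨fun ⟨hγ', h⟩ => hinj hγ' hγ h, by rintro rfl; exact ⟨hγ, rfl⟩⟩

lemma rootedMember_root (hinj : Set.InjOn root Γ) (hγ : γ ∈ Γ) :
    rootedMember root Γ (root γ) = γ := by
  rw [rootedMember, filter_root_eq_singleton hinj hγ, sup_singleton, id]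

lemma rootedMember_eq_empty_or (hinj : Set.InjOn root Γ) (v : V) :
    rootedMember root Γ v = ∅ ∨
      rootedMember root Γ v ∈ Γ ∧ root (rootedMember root Γ v) = v := by
  rcases {γ ∈ Γ | root γ = v}.eq_empty_or_nonempty with h | ⟨γ, hγ⟩
  · exact Or.inl (by rw [rootedMember, h, sup_empty]; rfl)
  · obtain ⟨hγΓ, rfl⟩ := mem_filter.1 hγ
    rw [rootedMember_root hinj hγΓ]
    exact Or.inr ⟨hγΓ, rfl⟩

lemma mem_iff_rootedMember_root (hinj : Set.InjOn root Γ) (hne : ∀ γ ∈ Γ, γ.Nonempty) :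
    γ ∈ Γ ↔ γ.Nonempty ∧ rootedMember root Γ (root γ) = γ := by
  refine ⟨fun hγ => ⟨hne γ hγ, rootedMember_root hinj hγ⟩, fun ⟨hγ, h⟩ => ?_⟩
  rcases rootedMember_eq_empty_or hinj (root γ) with h' | h'
  · exact absurd (h ▸ h') hγ.ne_empty
  · exact h ▸ h'.1

lemma eq_of_rootedMember_eq {Γ' : Finset (Finset V)} (hinj : Set.InjOn root Γ)
    (hinj' : Set.InjOn root Γ') (hne : ∀ γ ∈ Γ, γ.Nonempty) (hne' : ∀ γ ∈ Γ', γ.Nonempty)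
    (h : rootedMember root Γ = rootedMember root Γ') : Γ = Γ' := by
  ext γ
  rw [mem_iff_rootedMember_root hinj hne, mem_iff_rootedMember_root hinj' hne', h]

lemma card_rootedMember (hinj : Set.InjOn root Γ) (v : V) :
    #(rootedMember root Γ v) = ∑ γ ∈ Γ with root γ = v, #γ := by
  rcases {γ ∈ Γ | root γ = v}.eq_empty_or_nonempty with h | ⟨γ, hγ⟩
  · simp [rootedMember, h]
  · obtain ⟨hγΓ, rfl⟩ := mem_filter.1 hγ
    rw [rootedMember, filter_root_eq_singleton hinj hγΓ, sup_singleton, sum_singleton, id]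

lemma sum_card_rootedMember [Fintype V] (hinj : Set.InjOn root Γ) :
    ∑ v, #(rootedMember root Γ v) = ∑ γ ∈ Γ, #γ := by
  simp_rw [card_rootedMember hinj]
  exact sum_fiberwise Γ root _

end Rooting

section Independent

variable [DecidableEq V] {G : SimpleGraph V} {Γ : Finset (Finset V)}

lemma IsIndepFamily.pairwiseDisjoint (hΓ : IsIndepFamily G Γ) :
    (Γ : Set (Finset V)).PairwiseDisjoint id := by
  intro γ hγ γ' hγ' hne
  rw [Function.onFun, id, id, disjoint_left]
  intro x hx hx'
  apply hΓ.2 γ hγ γ' hγ' hne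
  rw [coe_union]
  exact SimpleGraph.induce_union_connected (hΓ.1 γ hγ).2.preconnected
    (hΓ.1 γ' hγ').2.preconnected ⟨x, hx, hx'⟩

lemma IsIndepFamily.injOn (hΓ : IsIndepFamily G Γ) {root : Finset V → V}
    (hroot : ∀ γ ∈ Γ, root γ ∈ γ) : Set.InjOn root Γ := fun γ hγ γ' hγ' h =>
  hΓ.pairwiseDisjoint.elim_finset hγ hγ' (root γ) (hroot γ hγ) (h ▸ hroot γ' hγ')

lemma IsIndepFamily.card_traceFam (hΓ : IsIndepFamily G Γ) :
    #(traceFam Γ) = ∑ γ ∈ Γ, #γ := by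
  rw [traceFam, sup_eq_biUnion]
  exact card_biUnion hΓ.pairwiseDisjoint

end Independent

lemma card_piAntidiag_nat_le_four_pow {ι : Type*} [DecidableEq ι] (s : Finset ι) {n : ℕ}
    (hn : #s ≤ n) : #(piAntidiag s n) ≤ 4 ^ n :=
  calc #(piAntidiag s n) = #(finsuppAntidiag s n) := by
        rw [finsuppAntidiag, card_map, card_attach]
    _ = (#s + n - 1).choose n := card_finsuppAntidiag_nat_eq_choose n
    _ ≤ 2 ^ (#s + n - 1) := Nat.choose_le_two_pow _ _
    _ ≤ 2 ^ (2 * n) := Nat.pow_le_pow_right (by norm_num) (by omega)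
    _ = 4 ^ n := by rw [pow_mul]; norm_num

lemma sum_univ_of_mem_piAntidiag {ι : Type*} [Fintype ι] [DecidableEq ι] {s : Finset ι} {n : ℕ}
    {κ : ι → ℕ} (hκ : κ ∈ piAntidiag s n) :
    ∑ i, κ i = n := by
  obtain ⟨hsum, hsupp⟩ := mem_piAntidiag.1 hκ
  rw [← hsum]
  exact (sum_subset (subset_univ s) fun i _ hi => not_not.1 (mt (hsupp i) hi)).symm

section Counting

variable [Fintype V] [DecidableEq V] {G : SimpleGraph V}

open Classical in
/-- The alternative `γ = ∅` only matters for `k = 0`, where it encodes "no polymer rooted at `v`". -/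
noncomputable def rootedPolymers (G : SimpleGraph V) (v : V) (k : ℕ) : Finset (Finset V) :=
  {γ | #γ = k ∧ (γ = ∅ ∨ IsPolymer G γ ∧ v ∈ γ)}

lemma card_rootedPolymers_le {c : ℝ} {v : V}
    (hcount : ∀ k : ℕ, 1 ≤ k →
      (Nat.card {γ : Finset V // IsPolymer G γ ∧ #γ = k ∧ v ∈ γ} : ℝ) ≤ Real.exp (c * k))
    (k : ℕ) : (#(rootedPolymers G v k) : ℝ) ≤ Real.exp (c * k) := by
  classical
  rcases Nat.eq_zero_or_pos k with rfl | hk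
  · have hsub : rootedPolymers G v 0 ⊆ {∅} := fun γ hγ => by
      simp_all [rootedPolymers]
    simpa using card_le_card hsub
  · convert hcount k hk using 2
    rw [Nat.card_eq_fintype_card, Fintype.card_subtype, rootedPolymers]
    congr 1
    ext γ
    simp only [mem_filter, mem_univ, true_and]
    constructor
    · rintro ⟨hk', rfl | ⟨hpoly, hv⟩⟩
      · simp at hk'; omega
      · exact ⟨hpoly, hk', hv⟩
    · rintro ⟨hpoly, hk', hv⟩
      exact ⟨hk', Or.inr ⟨hpoly, hv⟩⟩

lemma card_piFinset_rootedPolymers_le {c : ℝ}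
    (hcount : ∀ v : V, ∀ k : ℕ, 1 ≤ k →
      (Nat.card {γ : Finset V // IsPolymer G γ ∧ #γ = k ∧ v ∈ γ} : ℝ) ≤ Real.exp (c * k))
    (κ : V → ℕ) :
    (#(Fintype.piFinset fun v => rootedPolymers G v (κ v)) : ℝ) ≤ Real.exp (c * ∑ v, κ v) := by
  rw [Fintype.card_piFinset, Nat.cast_prod, Nat.cast_sum, mul_sum, Real.exp_sum]
  exact prod_le_prod (fun _ _ => Nat.cast_nonneg _)
    fun v _ => card_rootedPolymers_le (hcount v) (κ v)

noncomputable def rootedAssignments (G : SimpleGraph V) (Δ : Finset V) (n : ℕ) :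
    Finset (V → Finset V) :=
  (piAntidiag Δ n).biUnion fun κ => Fintype.piFinset fun v => rootedPolymers G v (κ v)

lemma card_rootedAssignments_le {c : ℝ}
    (hcount : ∀ v : V, ∀ k : ℕ, 1 ≤ k →
      (Nat.card {γ : Finset V // IsPolymer G γ ∧ #γ = k ∧ v ∈ γ} : ℝ) ≤ Real.exp (c * k))
    {Δ : Finset V} {n : ℕ} (hn : #Δ ≤ n) :
    (#(rootedAssignments G Δ n) : ℝ) ≤ 4 ^ n * Real.exp (c * n) :=
  calc (#(rootedAssignments G Δ n) : ℝ)
      ≤ ∑ κ ∈ piAntidiag Δ n, (#(Fintype.piFinset fun v => rootedPolymers G v (κ v)) : ℝ) := by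
        exact_mod_cast card_biUnion_le
    _ ≤ ∑ κ ∈ piAntidiag Δ n, Real.exp (c * n) := sum_le_sum fun κ hκ => by
        simpa [sum_univ_of_mem_piAntidiag hκ] using card_piFinset_rootedPolymers_le hcount κ
    _ = #(piAntidiag Δ n) * Real.exp (c * n) := by rw [sum_const, nsmul_eq_mul]
    _ ≤ 4 ^ n * Real.exp (c * n) := by
        gcongr
        exact_mod_cast card_piAntidiag_nat_le_four_pow Δ hn

lemma rootedMember_mem_rootedAssignments {Δ : Finset V} {n : ℕ} {root : Finset V → V}
    {Γ : Finset (Finset V)} (hinj : Set.InjOn root Γ) (hpoly : ∀ γ ∈ Γ, IsPolymer G γ)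
    (hroot : ∀ γ ∈ Γ, root γ ∈ γ ∩ Δ) (hsum : ∑ γ ∈ Γ, #γ = n) :
    rootedMember root Γ ∈ rootedAssignments G Δ n := by
  have hslot : ∀ v, rootedMember root Γ v = ∅ ∨
      IsPolymer G (rootedMember root Γ v) ∧ v ∈ rootedMember root Γ v ∧ v ∈ Δ := fun v => by
    rcases rootedMember_eq_empty_or hinj v with h | ⟨hmem, hv⟩
    · exact Or.inl h
    · obtain ⟨hin, hinΔ⟩ := mem_inter.1 (hroot _ hmem)
      rw [hv] at hin hinΔ
      exact Or.inr ⟨hpoly _ hmem, hin, hinΔ⟩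
  have hsupp : ∀ v, #(rootedMember root Γ v) ≠ 0 → v ∈ Δ := fun v hv => by
    rcases hslot v with h | h
    · simp [h] at hv
    · exact h.2.2
  refine mem_biUnion.2 ⟨fun v => #(rootedMember root Γ v), mem_piAntidiag.2 ⟨?_, hsupp⟩,
    Fintype.mem_piFinset.2 fun v => ?_⟩
  · rw [sum_subset (subset_univ Δ) fun v _ hv => not_not.1 (mt (hsupp v) hv),
      sum_card_rootedMember hinj, hsum]
  · simp only [rootedPolymers, mem_filter, mem_univ, true_and]
    exact (hslot v).imp_right fun h => ⟨h.1, h.2.1⟩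

end Counting

theorem stmt_4_general [Fintype V] [DecidableEq V] (G : SimpleGraph V) (c : ℝ)
    (hcount : ∀ v : V, ∀ k : ℕ, 1 ≤ k →
      (Nat.card {γ : Finset V // IsPolymer G γ ∧ γ.card = k ∧ v ∈ γ} : ℝ) ≤
        Real.exp (c * k))
    (Δ : Finset V) (hΔ : Δ.Nonempty) (n : ℕ) (hn : Δ.card ≤ n) :
    (Nat.card {Γ : Finset (Finset V) // IsIndepFamily G Γ ∧ (∀ γ ∈ Γ, (γ ∩ Δ).Nonempty) ∧
        (traceFam Γ).card = n} : ℝ) ≤ 4 ^ n * Real.exp (c * n) := by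
  obtain ⟨v₀, -⟩ := hΔ
  have : Nonempty V := ⟨v₀⟩
  choose! root hroot using fun γ : Finset V => fun h : (γ ∩ Δ).Nonempty => h
  have hinj : ∀ Γ, IsIndepFamily G Γ → (∀ γ ∈ Γ, (γ ∩ Δ).Nonempty) → Set.InjOn root Γ :=
    fun Γ hΓ hmeet => hΓ.injOn fun γ hγ => (mem_inter.1 (hroot γ (hmeet γ hγ))).1
  let encode : {Γ : Finset (Finset V) // IsIndepFamily G Γ ∧ (∀ γ ∈ Γ, (γ ∩ Δ).Nonempty) ∧
      (traceFam Γ).card = n} → rootedAssignments G Δ n := fun ⟨Γ, hΓ, hmeet, htrace⟩ =>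
    ⟨rootedMember root Γ, rootedMember_mem_rootedAssignments (hinj Γ hΓ hmeet) hΓ.1
      (fun γ hγ => hroot γ (hmeet γ hγ)) (hΓ.card_traceFam ▸ htrace)⟩
  have encode_injective : Function.Injective encode := by
    rintro ⟨Γ, hΓ, hmeet, _⟩ ⟨Γ', hΓ', hmeet', _⟩ h
    exact Subtype.ext (eq_of_rootedMember_eq (hinj Γ hΓ hmeet) (hinj Γ' hΓ' hmeet')
      (fun γ hγ => (hΓ.1 γ hγ).1) (fun γ hγ => (hΓ'.1 γ hγ).1) (congrArg Subtype.val h))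
  calc _ ≤ (#(rootedAssignments G Δ n) : ℝ) := by
        exact_mod_cast (Nat.card_le_card_of_injective encode encode_injective).trans_eq
          (Nat.card_eq_finsetCard _)
    _ ≤ 4 ^ n * Real.exp (c * n) := card_rootedAssignments_le hcount hn

/-- Let `G` be a finite graph and `c > 0` be such that for every vertex `v`
and `k ≥ 1` the number of connected subsets of cardinality `k` containing `v` is at most
`e^{ck}`.  Then for every nonempty `Δ` and `n ≥ |Δ|`, the number of independent families of
polymers, all of whose members intersect `Δ`, with trace of cardinality `n`, is at most
`4^n · e^{cn}`. -/
theorem stmt_4 [Fintype V] [DecidableEq V] (G : SimpleGraph V) (c : ℝ) (hc : 0 < c)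
    (hcount : ∀ v : V, ∀ k : ℕ, 1 ≤ k →
      (Nat.card {γ : Finset V // IsPolymer G γ ∧ γ.card = k ∧ v ∈ γ} : ℝ) ≤
        Real.exp (c * k))
    (Δ : Finset V) (hΔ : Δ.Nonempty) (n : ℕ) (hn : Δ.card ≤ n) :
    (Nat.card {Γ : Finset (Finset V) // IsIndepFamily G Γ ∧ (∀ γ ∈ Γ, (γ ∩ Δ).Nonempty) ∧
        (traceFam Γ).card = n} : ℝ) ≤ 4 ^ n * Real.exp (c * n) :=
  stmt_4_general G c hcount Δ hΔ n hn
end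

section
/- Let (Ω, ℙ) be a finite probability space and V a finite set. For each x ∈ V, let C_x : Ω → (subsets of V) be a random subset and f_x : Ω → ℂ a random variable. For A ⊆ V write C_A := ∪_{x∈A} C_x. Let a ≥ 0, c₀ ∈ [0,1] and c ≥ 1 be real numbers such that: (i) |f_x(ω)| ≤ c₀ for all x ∈ V and ω ∈ Ω; (ii) √c₀ · e^a ≤ 1; (iii) ℙ[|C_A| ≥ n] ≤ e^{a|A| − cn} for every nonempty A ⊆ V and every integer n ≥ 1. Then for every nonempty γ ⊆ V, | Σ_{A ⊆ γ} 𝔼_ℙ[ (Π_{x∈A} f_x) · 1{C_A = γ} ] | ≤ √c₀ · e^{−(c−1)|γ|}. -/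
open Finset
open scoped Classical

/-!
Bound each of the `2^|γ|` terms separately. The term for `A = ∅` vanishes, since `C_∅ = ∅ ≠ γ`.
For `A ≠ ∅`, the event `C_A = γ` forces `|C_A| ≥ |γ|`, so the tail bound and `|f_x| ≤ c₀` give
`c₀^|A| e^{a|A| - c|γ|}`; splitting `c₀ = √c₀ · √c₀` and using `√c₀ e^a ≤ 1` this is at most
`√c₀ e^{-c|γ|}`. Finally `2^|γ| ≤ e^|γ|` absorbs the number of terms.
-/

lemma norm_sum_mul_indicator_le {Ω : Type*} [Fintype Ω] (P : Ω → ℝ) (hP : ∀ ω, 0 ≤ P ω)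
    (g : Ω → ℂ) {M : ℝ} (hg : ∀ ω, ‖g ω‖ ≤ M) (p q : Ω → Prop) [DecidablePred p]
    [DecidablePred q] (hpq : ∀ ω, p ω → q ω) :
    ‖∑ ω, (P ω : ℂ) * (g ω * if p ω then 1 else 0)‖ ≤ M * ∑ ω, if q ω then P ω else 0 := by
  rw [mul_sum]
  refine (norm_sum_le _ _).trans (sum_le_sum fun ω _ => ?_)
  by_cases hp : p ω
  · rw [if_pos hp, if_pos (hpq ω hp), mul_one, norm_mul, Complex.norm_real,
      Real.norm_of_nonneg (hP ω), mul_comm]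
    exact mul_le_mul_of_nonneg_right (hg ω) (hP ω)
  · have hM : 0 ≤ M := (norm_nonneg _).trans (hg ω)
    rw [if_neg hp, mul_zero, mul_zero, norm_zero]
    split_ifs
    exacts [mul_nonneg hM (hP ω), le_of_eq (mul_zero M).symm]

lemma pow_mul_exp_le_sqrt {c₀ a : ℝ} (hc₀0 : 0 ≤ c₀) (hc₀1 : c₀ ≤ 1)
    (hsmall : √c₀ * Real.exp a ≤ 1) {k : ℕ} (hk : 1 ≤ k) :
    c₀ ^ k * Real.exp (a * k) ≤ √c₀ := by
  have hsqrt : √c₀ ≤ 1 := Real.sqrt_le_one.mpr hc₀1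
  calc c₀ ^ k * Real.exp (a * k) = √c₀ ^ k * (√c₀ * Real.exp a) ^ k := by
        rw [mul_pow, ← mul_assoc, ← mul_pow, Real.mul_self_sqrt hc₀0, mul_comm a,
          Real.exp_nat_mul]
    _ ≤ √c₀ ^ k * 1 := by gcongr; exact pow_le_one₀ (by positivity) hsmall
    _ ≤ √c₀ := by rw [mul_one]; exact pow_le_of_le_one (Real.sqrt_nonneg _) hsqrt (by omega)

lemma two_pow_le_exp (n : ℕ) : (2 : ℝ) ^ n ≤ Real.exp n := by
  rw [← Real.exp_one_pow]
  gcongr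
  linarith [Real.add_one_le_exp (1 : ℝ)]

section Polymer

variable {Ω V : Type*} [Fintype Ω] [DecidableEq V] (P : Ω → ℝ) (C : V → Ω → Finset V)
  (f : V → Ω → ℂ) {a c₀ c : ℝ}

lemma norm_expectation_prod_indicator_le (hP0 : ∀ ω, 0 ≤ P ω) (hc₀0 : 0 ≤ c₀)
    (hc₀1 : c₀ ≤ 1) (hf : ∀ x ω, ‖f x ω‖ ≤ c₀) (hsmall : √c₀ * Real.exp a ≤ 1)
    (htail : ∀ A : Finset V, A.Nonempty → ∀ n : ℕ, 1 ≤ n →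
      (∑ ω, if n ≤ (A.biUnion fun x => C x ω).card then P ω else 0) ≤
        Real.exp (a * A.card - c * n))
    {γ : Finset V} (hγ : γ.Nonempty) (A : Finset V) :
    ‖∑ ω, (P ω : ℂ) *
        ((∏ x ∈ A, f x ω) * (if A.biUnion (fun x => C x ω) = γ then 1 else 0))‖ ≤
      √c₀ * Real.exp (-(c * γ.card)) := by
  rcases A.eq_empty_or_nonempty with rfl | hA
  · simp only [biUnion_empty, hγ.ne_empty.symm, if_false, mul_zero, sum_const_zero, norm_zero]
    positivity
  have hprod : ∀ ω, ‖∏ x ∈ A, f x ω‖ ≤ c₀ ^ A.card := fun ω => by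
    rw [norm_prod, ← prod_const]
    exact prod_le_prod (fun x _ => norm_nonneg _) fun x _ => hf x ω
  calc _ ≤ c₀ ^ A.card * ∑ ω, if γ.card ≤ (A.biUnion fun x => C x ω).card then P ω else 0 :=
        norm_sum_mul_indicator_le P hP0 _ hprod _ _ fun ω h => (card_le_card h.ge)
    _ ≤ c₀ ^ A.card * Real.exp (a * A.card - c * γ.card) := by
        gcongr
        exact htail A hA _ hγ.card_pos
    _ = c₀ ^ A.card * Real.exp (a * A.card) * Real.exp (-(c * γ.card)) := by
        rw [mul_assoc, ← Real.exp_add, sub_eq_add_neg]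
    _ ≤ √c₀ * Real.exp (-(c * γ.card)) := by
        gcongr
        exact pow_mul_exp_le_sqrt hc₀0 hc₀1 hsmall hA.card_pos

end Polymer

theorem stmt_7_general {Ω V : Type*} [Fintype Ω] [DecidableEq V]
    (P : Ω → ℝ) (hP0 : ∀ ω, 0 ≤ P ω)
    (C : V → Ω → Finset V) (f : V → Ω → ℂ)
    (a c₀ c : ℝ) (hc₀0 : 0 ≤ c₀) (hc₀1 : c₀ ≤ 1)
    (hf : ∀ x ω, ‖f x ω‖ ≤ c₀)
    (hsmall : Real.sqrt c₀ * Real.exp a ≤ 1)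
    (htail : ∀ A : Finset V, A.Nonempty → ∀ n : ℕ, 1 ≤ n →
      (∑ ω, if n ≤ (A.biUnion fun x => C x ω).card then P ω else 0) ≤
        Real.exp (a * A.card - c * n)) :
    ∀ γ : Finset V, γ.Nonempty →
      ‖∑ A ∈ γ.powerset, ∑ ω, (P ω : ℂ) *
          ((∏ x ∈ A, f x ω) * (if A.biUnion (fun x => C x ω) = γ then 1 else 0))‖ ≤
        Real.sqrt c₀ * Real.exp (-(c - 1) * γ.card) := by
  intro γ hγ
  calc _ ≤ ∑ A ∈ γ.powerset, √c₀ * Real.exp (-(c * γ.card)) :=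
        (norm_sum_le _ _).trans <| sum_le_sum fun A _ =>
          norm_expectation_prod_indicator_le P C f hP0 hc₀0 hc₀1 hf hsmall htail hγ A
    _ = 2 ^ γ.card * (√c₀ * Real.exp (-(c * γ.card))) := by
        rw [sum_const, card_powerset, nsmul_eq_mul, Nat.cast_pow, Nat.cast_ofNat]
    _ ≤ Real.exp γ.card * (√c₀ * Real.exp (-(c * γ.card))) := by
        gcongr
        exact two_pow_le_exp _
    _ = √c₀ * Real.exp (-(c - 1) * γ.card) := by
        rw [mul_left_comm, ← Real.exp_add]
        ring_nf

/-- Let `(Ω, ℙ)` be a finite probability space, `V` a finite set, `C_x`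
random subsets of `V` and `f_x` complex random variables.  Assume `|f_x| ≤ c₀ ≤ 1`,
`√c₀ · e^a ≤ 1`, and the tail bound `ℙ[|C_A| ≥ n] ≤ e^{a|A| - cn}` for nonempty `A ⊆ V`,
`n ≥ 1`, with `a ≥ 0` and `c ≥ 1`.  Then for every nonempty `γ ⊆ V`,
`|Σ_{A ⊆ γ} 𝔼[(Π_{x∈A} f_x)·1{C_A = γ}]| ≤ √c₀ · e^{-(c-1)|γ|}`. -/
theorem stmt_7 {Ω V : Type*} [Fintype Ω] [Fintype V] [DecidableEq V]
    (P : Ω → ℝ) (hP0 : ∀ ω, 0 ≤ P ω) (hP1 : ∑ ω, P ω = 1)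
    (C : V → Ω → Finset V) (f : V → Ω → ℂ)
    (a c₀ c : ℝ) (ha : 0 ≤ a) (hc₀0 : 0 ≤ c₀) (hc₀1 : c₀ ≤ 1) (hc : 1 ≤ c)
    (hf : ∀ x ω, ‖f x ω‖ ≤ c₀)
    (hsmall : Real.sqrt c₀ * Real.exp a ≤ 1)
    (htail : ∀ A : Finset V, A.Nonempty → ∀ n : ℕ, 1 ≤ n →
      (∑ ω, if n ≤ (A.biUnion fun x => C x ω).card then P ω else 0) ≤
        Real.exp (a * A.card - c * n)) :
    ∀ γ : Finset V, γ.Nonempty →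
      ‖∑ A ∈ γ.powerset, ∑ ω, (P ω : ℂ) *
          ((∏ x ∈ A, f x ω) * (if A.biUnion (fun x => C x ω) = γ then 1 else 0))‖ ≤
        Real.sqrt c₀ * Real.exp (-(c - 1) * γ.card) :=
  stmt_7_general P hP0 C f a c₀ c hc₀0 hc₀1 hf hsmall htail
end
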